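/- arXiv:2011.09823 — 7 statements merged into one kernel-verified Lean document; each statement's English description precedes it below -/
import Mathlib

section
/- Let V be a finite set of cardinality n, r ≤ n a positive integer, and T = {X_1, ..., X_k} a sequence of subsets of V. For i = 0,...,k let T_i = {X_1,...,X_i}. Suppose that for every i = 0,...,k-1 there is a block A of atoms(T_i) that is split in atoms(T_{i+1}) into two sets each of cardinality at least r. Then k ≤ n/r - 1. -/
/-- `u` and `v` lie in the same atom of the family `T` of subsets of `V`. -/
def sameAtom {V : Type*} (T : Set (Set V)) (u v : V) : Prop :=
  ∀ X ∈ T, (u ∈ X ↔ v ∈ X)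

/-- The family `T_i = {X_1, …, X_i}` of the first `i` sets of the sequence `X`. -/
def famUpTo {V : Type*} {k : ℕ} (X : Fin k → Set V) (i : ℕ) : Set (Set V) :=
  {Y | ∃ j : Fin k, (j : ℕ) < i ∧ Y = X j}

/-!
Call a family of pairwise disjoint sets, each of size at least `r` and each a union of atoms
of `T`, an `r`-packing for `T`. Every `r`-packing for `T_i` is one for `T_{i+1}`. When `T_{i+1}`
splits an atom `a` of `T_i` into two atoms `A₁, A₂` of size at least `r`, drop from the packing
the (at most one) member containing `a` and add `A₁` and `A₂`: the packing grows by at least one.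
Starting from `{V}`, `T_k` thus has an `r`-packing with `k + 1` members, so `(k + 1) r ≤ n`.
-/

section Atoms

variable {V : Type*} {T T' : Set (Set V)}

lemma sameAtom_refl (T : Set (Set V)) (u : V) : sameAtom T u u := fun _ _ => Iff.rfl

lemma sameAtom.symm {u v : V} (h : sameAtom T u v) : sameAtom T v u :=
  fun X hX => (h X hX).symm

lemma sameAtom.trans {u v w : V} (huv : sameAtom T u v) (hvw : sameAtom T v w) :
    sameAtom T u w :=
  fun X hX => (huv X hX).trans (hvw X hX)

lemma sameAtom.anti (hT : T ⊆ T') {u v : V} (h : sameAtom T' u v) : sameAtom T u v :=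
  fun X hX => h X (hT hX)

lemma famUpTo_mono {k : ℕ} (X : Fin k → Set V) : Monotone (famUpTo X) := by
  rintro i j hij _ ⟨m, hm, rfl⟩
  exact ⟨m, hm.trans_le hij, rfl⟩

def atomOf (T : Set (Set V)) (u : V) : Set V := {z | sameAtom T u z}

lemma mem_atomOf_self (T : Set (Set V)) (u : V) : u ∈ atomOf T u := sameAtom_refl T u

def IsAtomUnion (T : Set (Set V)) (D : Set V) : Prop :=
  ∀ ⦃x y⦄, sameAtom T x y → x ∈ D → y ∈ D

lemma isAtomUnion_univ (T : Set (Set V)) : IsAtomUnion T Set.univ := fun _ _ _ _ => trivial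

lemma isAtomUnion_atomOf (T : Set (Set V)) (u : V) : IsAtomUnion T (atomOf T u) :=
  fun _ _ hxy hx => sameAtom.trans hx hxy

lemma IsAtomUnion.mono {D : Set V} (hD : IsAtomUnion T D) (hT : T ⊆ T') : IsAtomUnion T' D :=
  fun _ _ hxy => hD (hxy.anti hT)

end Atoms

structure IsAtomPacking {V : Type*} (T : Set (Set V)) (r : ℕ) (F : Finset (Set V)) : Prop where
  pairwiseDisjoint : (F : Set (Set V)).PairwiseDisjoint id
  le_ncard : ∀ D ∈ F, r ≤ D.ncard
  isAtomUnion : ∀ D ∈ F, IsAtomUnion T D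

namespace IsAtomPacking

variable {V : Type*} {T T' : Set (Set V)} {r : ℕ} {F : Finset (Set V)}

lemma singleton_univ [Finite V] (T : Set (Set V)) {r : ℕ} (hr : r ≤ Nat.card V) :
    IsAtomPacking T r {Set.univ} where
  pairwiseDisjoint := by simp
  le_ncard := by simpa [Set.ncard_univ] using hr
  isAtomUnion := by simpa using isAtomUnion_univ T

lemma card_mul_le [Finite V] (hF : IsAtomPacking T r F) : F.card * r ≤ Nat.card V :=
  calc F.card * r = F.card • r := (smul_eq_mul ..).symm
    _ ≤ ∑ D ∈ F, D.ncard := F.card_nsmul_le_sum _ r hF.le_ncard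
    _ = (⋃ D ∈ (F : Set (Set V)), D).ncard := by
      rw [F.finite_toSet.ncard_biUnion (fun D _ => D.toFinite) hF.pairwiseDisjoint,
        finsum_mem_coe_finset]
    _ ≤ Nat.card V := Set.ncard_le_card _

lemma card_le_card_filter_notMem_add_one (hF : IsAtomPacking T r F) (u : V)
    [DecidablePred (u ∈ · : Set V → Prop)] :
    F.card ≤ (F.filter (u ∉ ·)).card + 1 := by
  have hle : (F.filter (u ∈ ·)).card ≤ 1 :=
    Finset.card_le_one.2 fun _ hD _ hE =>
      hF.pairwiseDisjoint.elim_set (Finset.mem_filter.1 hD).1 (Finset.mem_filter.1 hE).1 u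
        (Finset.mem_filter.1 hD).2 (Finset.mem_filter.1 hE).2
  have := F.card_filter_add_card_filter_not (u ∈ ·)
  omega

lemma exists_card_succ_le (hF : IsAtomPacking T r F) (hT : T ⊆ T') {u v : V}
    (huv : sameAtom T u v) (hne : ¬ sameAtom T' u v)
    (hu : r ≤ (atomOf T' u).ncard) (hv : r ≤ (atomOf T' v).ncard) :
    ∃ F', IsAtomPacking T' r F' ∧ F.card + 1 ≤ F'.card := by
  classical
  set A := atomOf T' u
  set B := atomOf T' v
  set G := F.filter (u ∉ ·)
  have hAu : ∀ z ∈ A, sameAtom T u z := fun z hz => hz.anti hT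
  have hBu : ∀ z ∈ B, sameAtom T u z := fun z hz => huv.trans (hz.anti hT)
  -- a member of `F` avoiding `u` avoids the whole `T`-atom of `u`, which contains `A ∪ B`
  have hG : ∀ D ∈ G, ∀ z, sameAtom T u z → z ∉ D := fun D hD z hz hzD =>
    (Finset.mem_filter.1 hD).2 (hF.isAtomUnion D (Finset.mem_filter.1 hD).1 hz.symm hzD)
  have hAG : ∀ D ∈ G, Disjoint A D :=
    fun D hD => Set.disjoint_left.2 fun z hzA => hG D hD z (hAu z hzA)
  have hBG : ∀ D ∈ G, Disjoint B D :=
    fun D hD => Set.disjoint_left.2 fun z hzB => hG D hD z (hBu z hzB)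
  have hAB : Disjoint A B :=
    Set.disjoint_left.2 fun z hzA hzB => hne (hzA.trans hzB.symm)
  have hAnotG : A ∉ G := fun h => hG A h u (sameAtom_refl T u) (mem_atomOf_self T' u)
  have hBnotG : B ∉ G := fun h => hG B h v huv (mem_atomOf_self T' v)
  have hAnotB : A ∉ insert B G := by
    rw [Finset.mem_insert, not_or]
    exact ⟨fun h => Set.disjoint_left.1 hAB (mem_atomOf_self T' u) (h ▸ mem_atomOf_self T' u),
      hAnotG⟩
  refine ⟨insert A (insert B G), ⟨?_, ?_, ?_⟩, ?_⟩
  · rw [Finset.coe_insert, Finset.coe_insert]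
    refine ((hF.pairwiseDisjoint.subset (Finset.coe_subset.2 (Finset.filter_subset _ _))).insert
      fun D hD _ => hBG D hD).insert ?_
    rintro D (rfl | hD) _
    exacts [hAB, hAG D hD]
  · simp only [Finset.mem_insert]
    rintro D (rfl | rfl | hD)
    exacts [hu, hv, hF.le_ncard D (Finset.mem_filter.1 hD).1]
  · simp only [Finset.mem_insert]
    rintro D (rfl | rfl | hD)
    exacts [isAtomUnion_atomOf T' u, isAtomUnion_atomOf T' v,
      (hF.isAtomUnion D (Finset.mem_filter.1 hD).1).mono hT]
  · have : F.card ≤ G.card + 1 := hF.card_le_card_filter_notMem_add_one u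
    rw [Finset.card_insert_of_notMem hAnotB, Finset.card_insert_of_notMem hBnotG]
    omega

end IsAtomPacking

lemma exists_atomPacking_famUpTo {V : Type*} [Finite V] {r k : ℕ} (hrV : r ≤ Nat.card V)
    (X : Fin k → Set V)
    (hsplit : ∀ i : Fin k, ∃ u v : V,
      sameAtom (famUpTo X i) u v ∧
      ¬ sameAtom (famUpTo X ((i : ℕ) + 1)) u v ∧
      r ≤ (atomOf (famUpTo X ((i : ℕ) + 1)) u).ncard ∧
      r ≤ (atomOf (famUpTo X ((i : ℕ) + 1)) v).ncard) :
    ∀ i ≤ k, ∃ F, IsAtomPacking (famUpTo X i) r F ∧ i + 1 ≤ F.card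
  | 0, _ => ⟨{Set.univ}, IsAtomPacking.singleton_univ _ hrV, le_rfl⟩
  | i + 1, hik => by
    obtain ⟨F, hF, hcard⟩ := exists_atomPacking_famUpTo hrV X hsplit i (by omega)
    obtain ⟨u, v, huv, hne, hu, hv⟩ := hsplit ⟨i, hik⟩
    obtain ⟨F', hF', hcard'⟩ :=
      hF.exists_card_succ_le (famUpTo_mono X i.le_succ) huv hne hu hv
    exact ⟨F', hF', by omega⟩

theorem stmt_2 {V : Type*} [Fintype V] (n r k : ℕ)
    (hn : Fintype.card V = n) (hr : 1 ≤ r) (hrn : r ≤ n)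
    (X : Fin k → Set V)
    (hsplit : ∀ i : Fin k, ∃ u v : V,
      sameAtom (famUpTo X i) u v ∧
      ¬ sameAtom (famUpTo X ((i : ℕ) + 1)) u v ∧
      r ≤ Set.ncard {z : V | sameAtom (famUpTo X ((i : ℕ) + 1)) u z} ∧
      r ≤ Set.ncard {z : V | sameAtom (famUpTo X ((i : ℕ) + 1)) v z}) :
    (k : ℝ) ≤ (n : ℝ) / (r : ℝ) - 1 := by
  rw [← Nat.card_eq_fintype_card] at hn
  subst hn
  obtain ⟨F, hF, hcard⟩ := exists_atomPacking_famUpTo hrn X hsplit k le_rfl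
  have hbound : (k + 1) * r ≤ Nat.card V :=
    (Nat.mul_le_mul_right r hcard).trans hF.card_mul_le
  have hr' : (0 : ℝ) < r := by exact_mod_cast hr
  rw [le_sub_iff_add_le, le_div_iff₀ hr']
  exact_mod_cast hbound
end

section
/- Let T be a tree on vertex set V, and let M be a family of subsets X ⊆ V such that each X is the shore of a cut strictly 2-respecting T, i.e., |Δ_T(X)| = 2. Let Q = {Δ_T(X) : X ∈ M} ⊆ E(T)^(2), define the auxiliary graph L on vertex set E(T) with edge set Q, and let F be a spanning forest of L. Then the family S = {shore(f) : f ∈ E(F)} satisfies atoms(S) = atoms(M). -/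
/-- `Δ_T(X)`: the set of edges of the graph `T` with exactly one endpoint in `X`. -/
def cutEdges {V : Type*} (T : SimpleGraph V) (X : Set V) : Set (Sym2 V) :=
  {e | e ∈ T.edgeSet ∧ ∃ a b, e = s(a, b) ∧ a ∈ X ∧ b ∉ X}

/-!
Fix `u, v` and the `u`–`v` path `P` in `T`. A set `X` with `Δ_T(X) = {e, e'}` separates `u` and
`v` iff exactly one of `e, e'` lies on `P`, so `u, v` lie in the same atom of a family of such
sets iff the predicate "lies on `P`" takes equal values at the two ends of every pair `Δ_T(X)`,
i.e. is constant along the edges of the graph these pairs span. For `M` this graph is `L`, for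
`S` it is `F`, and a predicate is constant along the edges of `L` iff it is constant along the
edges of a spanning forest of `L`.
-/

namespace SimpleGraph

variable {V : Type*}

theorem Reachable.iff_of_forall_adj {G : SimpleGraph V} {φ : V → Prop}
    (hφ : ∀ a b, G.Adj a b → (φ a ↔ φ b)) {a b : V} (hab : G.Reachable a b) : φ a ↔ φ b := by
  obtain ⟨w⟩ := hab
  induction w with
  | nil => rfl
  | cons h _ ih => exact (hφ _ _ h).trans ih

variable {T : SimpleGraph V}

theorem cutEdges_compl (X : Set V) : cutEdges T Xᶜ = cutEdges T X := by
  ext e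
  constructor <;> rintro ⟨he, a, b, rfl, ha, hb⟩ <;>
    exact ⟨he, b, a, Sym2.eq_swap, by simpa using hb, by simpa using ha⟩

theorem mk_mem_cutEdges_iff {X : Set V} {a b : V} (h : T.Adj a b) :
    s(a, b) ∈ cutEdges T X ↔ ¬(a ∈ X ↔ b ∈ X) := by
  constructor
  · rintro ⟨-, c, d, hcd, hc, hd⟩
    rcases Sym2.eq_iff.mp hcd with ⟨rfl, rfl⟩ | ⟨rfl, rfl⟩ <;> tauto
  · intro hne
    by_cases ha : a ∈ X
    · exact ⟨h, a, b, rfl, ha, by tauto⟩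
    · exact ⟨h, b, a, Sym2.eq_swap, by tauto, ha⟩

theorem Walk.mem_iff_mem_iff_of_cutEdges_eq_pair {X : Set V} {e e' : Sym2 V}
    (hX : cutEdges T X = {e, e'}) (hne : e ≠ e') {u v : V} (p : T.Walk u v)
    (hp : p.IsTrail) : (u ∈ X ↔ v ∈ X) ↔ (e ∈ p.edges ↔ e' ∈ p.edges) := by
  induction p with
  | nil => simp
  | @cons a b c h q ih =>
    rw [isTrail_cons] at hp
    specialize ih hp.1
    have hcut := mk_mem_cutEdges_iff (X := X) h
    rw [hX, Set.mem_insert_iff, Set.mem_singleton_iff] at hcut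
    rw [edges_cons, List.mem_cons, List.mem_cons]
    by_cases he : e = s(a, b)
    · subst he
      replace hcut : ¬(a ∈ X ↔ b ∈ X) := hcut.mp (Or.inl rfl)
      simp only [hp.2, true_or, true_iff, hne.symm, false_or] at ih ⊢
      tauto
    by_cases he' : e' = s(a, b)
    · subst he'
      replace hcut : ¬(a ∈ X ↔ b ∈ X) := hcut.mp (Or.inr rfl)
      simp only [hp.2, iff_false, true_or, iff_true, hne, false_or] at ih ⊢
      tauto
    replace hcut : a ∈ X ↔ b ∈ X :=
      not_not.mp (hcut.not.mp (not_or.mpr ⟨Ne.symm he, Ne.symm he'⟩))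
    simp only [he, he', false_or]
    rw [← ih, hcut]

theorem exists_notMem_cutEdges_eq (r : V) (X : Set V) :
    ∃ Y, r ∉ Y ∧ cutEdges T Y = cutEdges T X := by
  by_cases hr : r ∈ X
  · exact ⟨Xᶜ, by simpa using hr, cutEdges_compl X⟩
  · exact ⟨X, hr, rfl⟩

theorem sameAtom_iff_forall_adj {M : Set (Set V)} {G : SimpleGraph (Sym2 V)}
    (hMG : ∀ X ∈ M, ∃ e e', G.Adj e e' ∧ cutEdges T X = {e, e'})
    (hGM : ∀ e e', G.Adj e e' → ∃ X ∈ M, cutEdges T X = {e, e'})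
    {u v : V} (p : T.Walk u v) (hp : p.IsTrail) :
    sameAtom M u v ↔ ∀ e e', G.Adj e e' → (e ∈ p.edges ↔ e' ∈ p.edges) := by
  constructor
  · intro hsame e e' hadj
    obtain ⟨X, hXM, hX⟩ := hGM e e' hadj
    exact (p.mem_iff_mem_iff_of_cutEdges_eq_pair hX hadj.ne hp).mp (hsame X hXM)
  · intro hG X hXM
    obtain ⟨e, e', hadj, hX⟩ := hMG X hXM
    exact (p.mem_iff_mem_iff_of_cutEdges_eq_pair hX hadj.ne hp).mpr (hG e e' hadj)

end SimpleGraph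

open SimpleGraph

theorem stmt_3_general {V : Type*} (T : SimpleGraph V) (hT : T.IsTree)
    (r : V) (M : Set (Set V))
    (hM : ∀ X ∈ M, (cutEdges T X).ncard = 2)
    -- the auxiliary graph `L` on vertex set `E(T)`, with `{e,e'}` an edge iff it is the
    -- cut edge pair of some shore in `M`
    (L : SimpleGraph (Sym2 V))
    (hL : ∀ e e' : Sym2 V, L.Adj e e' ↔ e ≠ e' ∧ ∃ X ∈ M, cutEdges T X = {e, e'})
    -- `F` is a spanning forest of `L`
    (F : SimpleGraph (Sym2 V)) (hFL : F ≤ L)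
    (hFspan : ∀ e e' : Sym2 V, L.Reachable e e' → F.Reachable e e')
    -- `S = {shore(f) : f ∈ E(F)}`, shores chosen not to contain the root `r`
    (S : Set (Set V))
    (hS : S = {X : Set V | r ∉ X ∧ ∃ f ∈ F.edgeSet, cutEdges T X = {e : Sym2 V | e ∈ f}}) :
    ∀ u v : V, sameAtom S u v ↔ sameAtom M u v := by
  intro u v
  obtain ⟨P, hP⟩ := hT.connected.preconnected.exists_isPath u v
  have hpair : ∀ e e' : Sym2 V, {x | x ∈ s(e, e')} = ({e, e'} : Set (Sym2 V)) := by
    intro e e'; ext; simp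
  have hML : ∀ X ∈ M, ∃ e e', L.Adj e e' ∧ cutEdges T X = {e, e'} := fun X hX => by
    obtain ⟨e, e', hne, hcut⟩ := Set.ncard_eq_two.mp (hM X hX)
    exact ⟨e, e', (hL e e').mpr ⟨hne, X, hX, hcut⟩, hcut⟩
  have hSF : ∀ X ∈ S, ∃ e e', F.Adj e e' ∧ cutEdges T X = {e, e'} := by
    rw [hS]
    rintro X ⟨-, f, hf, hX⟩
    induction f using Sym2.ind with
    | _ e e' => exact ⟨e, e', hf, hX.trans (hpair e e')⟩
  have hFS : ∀ e e', F.Adj e e' → ∃ X ∈ S, cutEdges T X = {e, e'} := fun e e' hadj => by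
    obtain ⟨-, X, -, hX⟩ := (hL e e').mp (hFL hadj)
    obtain ⟨Y, hrY, hY⟩ := exists_notMem_cutEdges_eq r X
    exact ⟨Y, hS ▸ ⟨hrY, s(e, e'), hadj, by rw [hY, hX, hpair]⟩, hY.trans hX⟩
  rw [sameAtom_iff_forall_adj hSF hFS P hP.isTrail,
    sameAtom_iff_forall_adj hML (fun e e' h => ((hL e e').mp h).2) P hP.isTrail]
  exact ⟨fun h e e' hadj => (hFspan e e' hadj.reachable).iff_of_forall_adj h,
    fun h e e' hadj => h e e' (hFL hadj)⟩

theorem stmt_3 {V : Type*} [Fintype V] (T : SimpleGraph V) (hT : T.IsTree)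
    (r : V) (M : Set (Set V))
    (hM : ∀ X ∈ M, (cutEdges T X).ncard = 2)
    -- the auxiliary graph `L` on vertex set `E(T)`, with `{e,e'}` an edge iff it is the
    -- cut edge pair of some shore in `M`
    (L : SimpleGraph (Sym2 V))
    (hL : ∀ e e' : Sym2 V, L.Adj e e' ↔ e ≠ e' ∧ ∃ X ∈ M, cutEdges T X = {e, e'})
    -- `F` is a spanning forest of `L`
    (F : SimpleGraph (Sym2 V)) (hFL : F ≤ L) (hFacyclic : F.IsAcyclic)
    (hFspan : ∀ e e' : Sym2 V, L.Reachable e e' → F.Reachable e e')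
    -- `S = {shore(f) : f ∈ E(F)}`, shores chosen not to contain the root `r`
    (S : Set (Set V))
    (hS : S = {X : Set V | r ∉ X ∧ ∃ f ∈ F.edgeSet, cutEdges T X = {e : Sym2 V | e ∈ f}}) :
    ∀ u v : V, sameAtom S u v ↔ sameAtom M u v :=
  stmt_3_general T hT r M hM L hL F hFL hFspan S hS
end

section
/- Let G = (V, w) be a weighted graph and P the partition of V into the atoms of a family T of cut shores that includes the shores of all minimum cuts of G (each X ∈ T satisfies both X and its complement nontrivial as appropriate). If X is the shore of a minimum cut of G and X ∈ T, then no edge of Δ_G(X) is contracted in G' = Contract(G, P), and consequently λ(Contract(G, P)) = λ(G) whenever |P| ≥ 2. -/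
open Classical in
/-- The weight of the cut with shore `X` in the weighted graph `(V, w)`. -/
noncomputable def cutWeight {V : Type*} [Fintype V] (w : V → V → ℝ) (X : Set V) : ℝ :=
  ∑ u : V, ∑ v : V, if u ∈ X ∧ v ∉ X then w u v else 0

lemma sum_rot3 {A B C : Type*} [Fintype A] [Fintype B] [Fintype C] (g : A → B → C → ℝ) :
    ∑ a : A, ∑ b : B, ∑ cc : C, g a b cc = ∑ b : B, ∑ cc : C, ∑ a : A, g a b cc := by
  rw [Finset.sum_comm]
  exact Finset.sum_congr rfl fun b _ => Finset.sum_comm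

open Classical in
lemma cut_contract {V W : Type*} [Fintype V] [Fintype W]
    (w : V → V → ℝ) (c : V → W) (w' : W → W → ℝ)
    (hw' : ∀ a b : W, a ≠ b →
      w' a b = ∑ u : V, ∑ v : V, if c u = a ∧ c v = b then w u v else 0)
    (Y : Set W) : cutWeight w' Y = cutWeight w (c ⁻¹' Y) := by
  unfold cutWeight
  have step : ∀ a b : W, (if a ∈ Y ∧ b ∉ Y then w' a b else 0) =
      ∑ u : V, ∑ v : V, if (a ∈ Y ∧ b ∉ Y) ∧ c u = a ∧ c v = b then w u v else 0 := by
    intro a b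
    by_cases h : a ∈ Y ∧ b ∉ Y
    · have hab : a ≠ b := fun e => h.2 (e ▸ h.1)
      rw [if_pos h, hw' a b hab]
      simp [h]
    · simp [h]
  calc (∑ a : W, ∑ b : W, if a ∈ Y ∧ b ∉ Y then w' a b else 0)
      = ∑ a : W, ∑ b : W, ∑ u : V, ∑ v : V,
          if (a ∈ Y ∧ b ∉ Y) ∧ c u = a ∧ c v = b then w u v else 0 := by
        simp_rw [step]
    _ = ∑ u : V, ∑ v : V, ∑ a : W, ∑ b : W,
          if (a ∈ Y ∧ b ∉ Y) ∧ c u = a ∧ c v = b then w u v else 0 := by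
        calc (∑ a : W, ∑ b : W, ∑ u : V, ∑ v : V,
              if (a ∈ Y ∧ b ∉ Y) ∧ c u = a ∧ c v = b then w u v else 0)
            = ∑ a : W, ∑ u : V, ∑ v : V, ∑ b : W,
              if (a ∈ Y ∧ b ∉ Y) ∧ c u = a ∧ c v = b then w u v else 0 :=
              Finset.sum_congr rfl fun a _ => sum_rot3 _
          _ = ∑ u : V, ∑ v : V, ∑ a : W, ∑ b : W,
              if (a ∈ Y ∧ b ∉ Y) ∧ c u = a ∧ c v = b then w u v else 0 :=
              sum_rot3 _
    _ = ∑ u : V, ∑ v : V, if u ∈ c ⁻¹' Y ∧ v ∉ c ⁻¹' Y then w u v else 0 := by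
        refine Finset.sum_congr rfl fun u _ => ?_
        refine Finset.sum_congr rfl fun v _ => ?_
        have : ∀ a b : W, ((a ∈ Y ∧ b ∉ Y) ∧ c u = a ∧ c v = b) ↔
            ((c u ∈ Y ∧ c v ∉ Y) ∧ a = c u ∧ b = c v) := by
          intro a b; constructor
          · rintro ⟨h1, rfl, rfl⟩; exact ⟨h1, rfl, rfl⟩
          · rintro ⟨h1, rfl, rfl⟩; exact ⟨h1, rfl, rfl⟩
        simp_rw [this]
        by_cases h : c u ∈ Y ∧ c v ∉ Y
        · simp only [Set.mem_preimage, h, true_and, if_pos h]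
          simp [Finset.sum_ite_eq', ite_and]
        · simp only [Set.mem_preimage]
          rw [if_neg h]
          rw [Finset.sum_eq_zero]
          intro a _
          rw [Finset.sum_eq_zero]
          intro b _
          rw [if_neg (fun hh => h hh.1)]
  
open Classical in
theorem stmt_7 {V W : Type*} [Fintype V] [Fintype W]
    (w : V → V → ℝ) (hsymm : ∀ u v, w u v = w v u) (hnn : ∀ u v, 0 ≤ w u v)
    (hloop : ∀ u, w u u = 0)
    (T : Set (Set V))
    -- `c : V → W` is the quotient map onto the partition `P = atoms(T)`
    (c : V → W) (hc : Function.Surjective c)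
    (hatoms : ∀ u v : V, c u = c v ↔ sameAtom T u v)
    (lamG : ℝ)
    (hlamG : IsLeast {x : ℝ | ∃ X : Set V, X ≠ ∅ ∧ X ≠ Set.univ ∧ x = cutWeight w X} lamG)
    -- `T` contains the shores of all minimum cuts of `G`
    (hTmin : ∀ X : Set V, X ≠ ∅ → X ≠ Set.univ → cutWeight w X = lamG → X ∈ T)
    -- `w'` is the weight function of `G' = Contract(G, P)`
    (w' : W → W → ℝ)
    (hw' : ∀ a b : W, a ≠ b →
      w' a b = ∑ u : V, ∑ v : V, if c u = a ∧ c v = b then w u v else 0)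
    -- `X` is the shore of a minimum cut of `G` and `X ∈ T`
    (X : Set V) (hX1 : X ≠ ∅) (hX2 : X ≠ Set.univ)
    (hXmin : cutWeight w X = lamG) (hXT : X ∈ T) :
    -- no edge of `Δ_G(X)` is contracted in `G'`
    (∀ u v : V, u ∈ X → v ∉ X → w u v ≠ 0 → c u ≠ c v) ∧
    -- and `λ(Contract(G, P)) = λ(G)` whenever `|P| ≥ 2`
    (∀ lamG' : ℝ, 2 ≤ Fintype.card W →
      IsLeast {x : ℝ | ∃ Y : Set W, Y ≠ ∅ ∧ Y ≠ Set.univ ∧ x = cutWeight w' Y} lamG' →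
      lamG' = lamG) := by
  have hsat : ∀ u v : V, c u = c v → (u ∈ X ↔ v ∈ X) := by
    intro u v h
    exact (hatoms u v).mp h X hXT
  constructor
  · intro u v hu hv _ hcc
    exact hv ((hsat u v hcc).mp hu)
  · intro lamG' _ hlamG'
    -- the preimage identity
    have hpre : c ⁻¹' (c '' X) = X := by
      ext v
      simp only [Set.mem_preimage, Set.mem_image]
      constructor
      · rintro ⟨u, hu, huv⟩; exact (hsat u v huv).mp hu
      · intro hv; exact ⟨v, hv, rfl⟩
    have hYne : c '' X ≠ ∅ := by
      obtain ⟨x, hx⟩ := Set.nonempty_iff_ne_empty.mpr hX1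
      exact Set.nonempty_iff_ne_empty.mp ⟨c x, x, hx, rfl⟩
    have hYnu : c '' X ≠ Set.univ := by
      intro h
      obtain ⟨v, hv⟩ : ∃ v, v ∉ X := by
        by_contra hcon
        push_neg at hcon
        exact hX2 (Set.eq_univ_of_forall hcon)
      have : c v ∈ c '' X := h ▸ Set.mem_univ _
      obtain ⟨u, hu, huv⟩ := this
      exact hv ((hsat u v huv).mp hu)
    have hle : lamG' ≤ lamG := by
      apply hlamG'.2
      refine ⟨c '' X, hYne, hYnu, ?_⟩
      rw [cut_contract w c w' hw', hpre, hXmin]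
    have hge : lamG ≤ lamG' := by
      obtain ⟨Y, hY1, hY2, hY3⟩ := hlamG'.1
      rw [hY3, cut_contract w c w' hw']
      apply hlamG.2
      refine ⟨c ⁻¹' Y, ?_, ?_, rfl⟩
      · obtain ⟨y, hy⟩ := Set.nonempty_iff_ne_empty.mpr hY1
        obtain ⟨v, rfl⟩ := hc y
        exact Set.nonempty_iff_ne_empty.mp ⟨v, hy⟩
      · intro h
        apply hY2
        apply Set.eq_univ_of_forall
        intro y
        obtain ⟨v, rfl⟩ := hc y
        exact (h ▸ Set.mem_univ v : v ∈ c ⁻¹' Y)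
    linarith
end

section
/- Let G be a weighted graph whose shore X ⊆ V satisfies: X is a block in atoms(K) for some family K, and there exists X' ∈ T (a non-star near-minimum cut shore, meaning w(Δ_G(X')) ≤ λ(G) + εd with |X'|, |complement| ≥ 2) witnessing that vertex v is 'small', i.e., the block A ∈ atoms(K) containing v is refined by X' into A_1 ∋ v and A_2 with |A_1| < βd/τ. If additionally the total weight of edges at v lying in cuts of K is less than αw(v) (where w(v) is the weighted degree of v), τ bounds all edge weights, and α + β ≤ (1-ε)/2, then removing v from X' yields a cut of weight strictly less than λ(G), a contradiction. Hence every small vertex v has weight at least α·w(v) among edges in ∪_{X∈K} Δ_G(X). -/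
open Classical

private lemma cutWeight_compl {V : Type*} [Fintype V] (w : V → V → ℝ)
    (hsymm : ∀ u v, w u v = w v u) (X : Set V) :
    cutWeight w Xᶜ = cutWeight w X := by
  unfold cutWeight
  rw [Finset.sum_comm]
  refine Finset.sum_congr rfl fun a _ => Finset.sum_congr rfl fun b _ => ?_
  by_cases h1 : a ∈ X <;> by_cases h2 : b ∈ X <;>
    simp [Set.mem_compl_iff, h1, h2, hsymm b a]

private lemma core {V : Type*} [Fintype V]
    (w : V → V → ℝ) (hsymm : ∀ u v, w u v = w v u) (hnn : ∀ u v, 0 ≤ w u v)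
    (hloop : ∀ u, w u u = 0)
    (τ : ℝ) (hτpos : 0 < τ) (hτ : ∀ u v, w u v ≤ τ)
    (ε : ℝ) (hε0 : 0 ≤ ε) (hε1 : ε < 1)
    (d : ℝ) (hd : IsLeast (Set.range fun u : V => cutWeight w {u}) d)
    (lam : ℝ)
    (hlam : IsLeast {x : ℝ | ∃ X : Set V, X ≠ ∅ ∧ X ≠ Set.univ ∧ x = cutWeight w X} lam)
    (α β : ℝ) (hα : α = (1 - ε) / 4) (hβ : β = (1 - ε) / 4)
    (K : Set (Set V)) (v : V) (X' : Set V)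
    (hX'1 : 2 ≤ X'.ncard) (hX'2 : 2 ≤ X'ᶜ.ncard)
    (hX'3 : cutWeight w X' ≤ lam + ε * d)
    (hA1 : ((Set.ncard {u : V | sameAtom K v u ∧ (u ∈ X' ↔ v ∈ X')} : ℕ) : ℝ) < β * d / τ)
    (hv : v ∈ X')
    (hcon : (∑ u : V, if ¬ sameAtom K v u then w v u else 0) < α * cutWeight w {v}) :
    False := by
  set wv := cutWeight w {v} with hwvdef
  set S₁ := ∑ u : V, if u ∈ X' ∧ u ≠ v then w v u else 0 with hS1def
  set S₂ := ∑ u : V, if u ∉ X' then w v u else 0 with hS2def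
  -- wv = sum over x ≠ v of w v x
  have hwv : wv = ∑ x : V, if x ≠ v then w v x else 0 := by
    rw [hwvdef]
    unfold cutWeight
    rw [Finset.sum_eq_single v]
    · refine Finset.sum_congr rfl fun x _ => ?_
      by_cases hx : x = v <;> simp [hx]
    · intro b _ hb
      apply Finset.sum_eq_zero
      intro x _
      simp [hb]
    · simp
  -- wv = S₁ + S₂
  have hsplit : wv = S₁ + S₂ := by
    rw [hwv, hS1def, hS2def, ← Finset.sum_add_distrib]
    refine Finset.sum_congr rfl fun x _ => ?_
    by_cases hx : x = v
    · subst hx; simp [hv]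
    · by_cases hxX : x ∈ X' <;> simp [hx, hxX]
  -- the tail sum
  set T : V → ℝ := fun u => ∑ x ∈ Finset.univ.erase v, if u ∈ X' ∧ x ∉ X' then w u x else 0
    with hTdef
  have hX : cutWeight w X' = S₂ + ∑ u ∈ Finset.univ.erase v, T u := by
    unfold cutWeight
    rw [← Finset.add_sum_erase Finset.univ _ (Finset.mem_univ v)]
    congr 1
    · rw [hS2def]
      refine Finset.sum_congr rfl fun x _ => ?_
      simp [hv]
    · refine Finset.sum_congr rfl fun u hu => ?_
      rw [← Finset.add_sum_erase Finset.univ _ (Finset.mem_univ v), hTdef]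
      simp [hv]
  have hS1' : S₁ = ∑ u ∈ Finset.univ.erase v, if u ∈ X' then w u v else 0 := by
    rw [hS1def, ← Finset.add_sum_erase Finset.univ _ (Finset.mem_univ v)]
    simp only [ne_eq, not_true_eq_false, and_false, if_false, zero_add]
    refine Finset.sum_congr rfl fun u hu => ?_
    have huv : u ≠ v := Finset.ne_of_mem_erase hu
    simp [huv, hsymm v u]
  have hY : cutWeight w (X' \ {v}) = S₁ + ∑ u ∈ Finset.univ.erase v, T u := by
    unfold cutWeight
    rw [← Finset.add_sum_erase Finset.univ _ (Finset.mem_univ v), hS1',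
      ← Finset.sum_add_distrib]
    refine Eq.trans ?_ (zero_add _)
    congr 1
    · exact Finset.sum_eq_zero fun x _ => if_neg (by simp)
    · refine Finset.sum_congr rfl fun u hu => ?_
      have huv : u ≠ v := Finset.ne_of_mem_erase hu
      have e1 : u ∈ X' \ {v} ↔ u ∈ X' := by simp [huv]
      rw [← Finset.add_sum_erase Finset.univ _ (Finset.mem_univ v)]
      congr 1
      · by_cases hu' : u ∈ X' <;> simp [hu', huv]
      · rw [hTdef]
        refine Finset.sum_congr rfl fun x hx => ?_
        have hxv : x ≠ v := Finset.ne_of_mem_erase hx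
        have e2 : x ∈ X' \ {v} ↔ x ∈ X' := by simp [hxv]
        by_cases hu' : u ∈ X' <;> by_cases hx' : x ∈ X' <;> simp [hu', hx', huv, hxv]
  -- bound S₁
  have hS1bound : S₁ < β * d + α * wv := by
    have hsplitS1 : S₁ = (∑ u : V, if u ∈ X' ∧ u ≠ v ∧ sameAtom K v u then w v u else 0)
        + ∑ u : V, if u ∈ X' ∧ u ≠ v ∧ ¬ sameAtom K v u then w v u else 0 := by
      rw [hS1def, ← Finset.sum_add_distrib]
      refine Finset.sum_congr rfl fun u _ => ?_
      by_cases h1 : u ∈ X' <;> by_cases h2 : u = v <;> by_cases h3 : sameAtom K v u <;>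
        simp [h1, h2, h3]
    have hAcard : (Finset.univ.filter
        (fun u => sameAtom K v u ∧ (u ∈ X' ↔ v ∈ X'))).card
        = Set.ncard {u : V | sameAtom K v u ∧ (u ∈ X' ↔ v ∈ X')} := by
      rw [Set.ncard_eq_toFinset_card']
      congr 1
      ext u
      simp [Set.mem_toFinset]
    have hAbound : (∑ u : V, if u ∈ X' ∧ u ≠ v ∧ sameAtom K v u then w v u else 0)
        ≤ τ * ((Set.ncard {u : V | sameAtom K v u ∧ (u ∈ X' ↔ v ∈ X')} : ℕ) : ℝ) := by
      have step : (∑ u : V, if u ∈ X' ∧ u ≠ v ∧ sameAtom K v u then w v u else 0)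
          ≤ ∑ u : V, if sameAtom K v u ∧ (u ∈ X' ↔ v ∈ X') then τ else 0 := by
        apply Finset.sum_le_sum
        intro u _
        by_cases h : u ∈ X' ∧ u ≠ v ∧ sameAtom K v u
        · have hmem : sameAtom K v u ∧ (u ∈ X' ↔ v ∈ X') := ⟨h.2.2, by simp [h.1, hv]⟩
          simp only [if_pos h, if_pos hmem]
          exact hτ v u
        · simp only [if_neg h]
          by_cases h' : sameAtom K v u ∧ (u ∈ X' ↔ v ∈ X') <;>
            simp [h', le_of_lt hτpos]
      have step2 : (∑ u : V, if sameAtom K v u ∧ (u ∈ X' ↔ v ∈ X') then τ else 0)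
          = ((Finset.univ.filter (fun u => sameAtom K v u ∧ (u ∈ X' ↔ v ∈ X'))).card : ℝ)
            * τ := by
        rw [Finset.sum_ite, Finset.sum_const, Finset.sum_const_zero, add_zero, nsmul_eq_mul]
      rw [step2, hAcard] at step
      linarith [step]
    have hBbound : (∑ u : V, if u ∈ X' ∧ u ≠ v ∧ ¬ sameAtom K v u then w v u else 0)
        ≤ ∑ u : V, if ¬ sameAtom K v u then w v u else 0 := by
      apply Finset.sum_le_sum
      intro u _
      by_cases h : u ∈ X' ∧ u ≠ v ∧ ¬ sameAtom K v u
      · simp [h, h.2.2]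
      · rw [if_neg h]
        by_cases h' : ¬ sameAtom K v u
        · rw [if_pos h']; exact hnn v u
        · rw [if_neg h']
    have hτA : τ * ((Set.ncard {u : V | sameAtom K v u ∧ (u ∈ X' ↔ v ∈ X')} : ℕ) : ℝ)
        < β * d := by
      have := mul_lt_mul_of_pos_left hA1 hτpos
      have heq : τ * (β * d / τ) = β * d := by field_simp
      linarith
    rw [hwvdef] at hcon
    linarith
  -- the modified cut is proper
  have hYne : X' \ {v} ≠ ∅ := by
    have hfin : X'.Finite := Set.toFinite X'
    have : 1 < X'.ncard := by omega
    rw [Set.one_lt_ncard_iff hfin] at this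
    obtain ⟨a, b, ha, hb, hab⟩ := this
    rcases eq_or_ne a v with rfl | hav
    · intro h
      have : b ∈ X' \ {a} := ⟨hb, by simp [hab.symm]⟩
      simp [h] at this
    · intro h
      have : a ∈ X' \ {v} := ⟨ha, by simp [hav]⟩
      simp [h] at this
  have hYuniv : X' \ {v} ≠ Set.univ := by
    have : X'ᶜ.Nonempty := by
      rw [← Set.ncard_pos (Set.toFinite _)]
      omega
    obtain ⟨u, hu⟩ := this
    intro h
    have : u ∈ X' \ {v} := h ▸ Set.mem_univ u
    exact hu this.1
  have hlamY : lam ≤ cutWeight w (X' \ {v}) :=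
    hlam.2 ⟨X' \ {v}, hYne, hYuniv, rfl⟩
  have hdwv : d ≤ wv := hd.2 ⟨v, rfl⟩
  subst hα hβ
  nlinarith [mul_nonneg (by linarith : (0:ℝ) ≤ 1 + ε) (by linarith : (0:ℝ) ≤ wv - d)]

open Classical in
theorem stmt_10 {V : Type*} [Fintype V]
    (w : V → V → ℝ) (hsymm : ∀ u v, w u v = w v u) (hnn : ∀ u v, 0 ≤ w u v)
    (hloop : ∀ u, w u u = 0)
    -- all edge weights are at most `τ`
    (τ : ℝ) (hτpos : 0 < τ) (hτ : ∀ u v, w u v ≤ τ)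
    (ε : ℝ) (hε0 : 0 ≤ ε) (hε1 : ε < 1)
    -- `d` is the minimum weighted degree, `lam = λ(G)` the minimum cut weight
    (d : ℝ) (hd : IsLeast (Set.range fun u : V => cutWeight w {u}) d)
    (lam : ℝ)
    (hlam : IsLeast {x : ℝ | ∃ X : Set V, X ≠ ∅ ∧ X ≠ Set.univ ∧ x = cutWeight w X} lam)
    -- parameters `α = β = (1-ε)/4`, so that `α + β ≤ (1-ε)/2`
    (α β : ℝ) (hα : α = (1 - ε) / 4) (hβ : β = (1 - ε) / 4)
    -- `K` is a family of cut shores; `v` is a 'small' vertex, witnessed by the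
    -- non-star near-minimum cut shore `X'`
    (K : Set (Set V)) (v : V) (X' : Set V)
    (hX'1 : 2 ≤ X'.ncard) (hX'2 : 2 ≤ X'ᶜ.ncard)
    (hX'3 : cutWeight w X' ≤ lam + ε * d)
    -- `X'` refines the block `A ∈ atoms(K)` containing `v` into `A₁ ∋ v` with
    -- `|A₁| < βd/τ`, and a nonempty `A₂`
    (hA1 : ((Set.ncard {u : V | sameAtom K v u ∧ (u ∈ X' ↔ v ∈ X')} : ℕ) : ℝ) < β * d / τ)
    (hA2 : ∃ u : V, sameAtom K v u ∧ ¬ (u ∈ X' ↔ v ∈ X')) :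
    -- then `v` has weight at least `α·w(v)` among the edges crossing some cut of `K`
    α * cutWeight w {v} ≤ ∑ u : V, if ¬ sameAtom K v u then w v u else 0 := by
  by_contra hcon
  push_neg at hcon
  by_cases hv : v ∈ X'
  · exact core w hsymm hnn hloop τ hτpos hτ ε hε0 hε1 d hd lam hlam α β hα hβ K v X'
      hX'1 hX'2 hX'3 hA1 hv hcon
  · have hsetEq : {u : V | sameAtom K v u ∧ (u ∈ X'ᶜ ↔ v ∈ X'ᶜ)}
        = {u : V | sameAtom K v u ∧ (u ∈ X' ↔ v ∈ X')} := by
      ext u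
      simp only [Set.mem_setOf_eq, Set.mem_compl_iff]
      tauto
    refine core w hsymm hnn hloop τ hτpos hτ ε hε0 hε1 d hd lam hlam α β hα hβ K v X'ᶜ
      hX'2 (by rw [compl_compl]; exact hX'1)
      (by rw [cutWeight_compl w hsymm]; exact hX'3)
      (by rw [hsetEq]; exact hA1) hv hcon
end

section
/- Let n ≥ 8 be a multiple of 4 and let G = (L ⊔ R, w) be a complete weighted bipartite graph with |L| = 3n/4, |R| = n/4, and w({x,y}) ≥ 1 for every x ∈ L, y ∈ R (edges only between L and R). Then every cut of G that is not a star cut Δ_G({x}) for some x ∈ L has weight at least n/2. -/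
theorem stmt_11 {V : Type*} [Fintype V] (n : ℕ) (hn8 : 8 ≤ n) (hn4 : 4 ∣ n)
    (hcard : Fintype.card V = n)
    -- `G` is a complete weighted bipartite graph with parts `L` and `R = Lᶜ`,
    -- `|L| = 3n/4`, and all bipartite edge weights at least 1
    (L : Set V) (hL : L.ncard = 3 * n / 4)
    (w : V → V → ℝ) (hsymm : ∀ a b, w a b = w b a)
    (hinL : ∀ a ∈ L, ∀ b ∈ L, w a b = 0)
    (hinR : ∀ a ∉ L, ∀ b ∉ L, w a b = 0)
    (hge1 : ∀ a ∈ L, ∀ b ∉ L, 1 ≤ w a b) :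
    -- every cut that is not a star cut `Δ_G({x})` with `x ∈ L` has weight at least `n/2`
    ∀ Z : Set V, Z ≠ ∅ → Z ≠ Set.univ →
      (∀ x ∈ L, Z ≠ {x} ∧ Z ≠ ({x} : Set V)ᶜ) →
      (n : ℝ) / 2 ≤ cutWeight w Z := by
  classical
  intro Z hZne hZuniv hstar
  obtain ⟨m, hm⟩ := hn4
  have hm2 : 2 ≤ m := by omega
  set k := (Finset.univ.filter (fun u : V => u ∈ Z ∧ u ∈ L)).card with hk
  set l := (Finset.univ.filter (fun u : V => u ∈ Z ∧ u ∉ L)).card with hl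
  set c := (Finset.univ.filter (fun u : V => u ∉ Z ∧ u ∈ L)).card with hc
  set d := (Finset.univ.filter (fun u : V => u ∉ Z ∧ u ∉ L)).card with hd
  -- cardinality identities
  have hLcard : (Finset.univ.filter (fun u : V => u ∈ L)).card = 3 * m := by
    have : (Finset.univ.filter (fun u : V => u ∈ L)).card = L.ncard := by
      rw [Set.ncard_eq_toFinset_card']
      congr 1
      ext x
      simp
    omega
  have hkc : k + c = 3 * m := by
    rw [hk, hc, Finset.card_filter, Finset.card_filter, ← Finset.sum_add_distrib, ← hLcard,
      Finset.card_filter]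
    exact Finset.sum_congr rfl fun u _ => by
      by_cases h1 : u ∈ Z <;> by_cases h2 : u ∈ L <;> simp [h1, h2]
  have hcardV : (Finset.univ : Finset V).card = 4 * m := by
    rw [Finset.card_univ, hcard, hm]
  have hsum4 : k + l + c + d = 4 * m := by
    rw [hk, hl, hc, hd, Finset.card_filter, Finset.card_filter, Finset.card_filter,
      Finset.card_filter, ← Finset.sum_add_distrib, ← Finset.sum_add_distrib,
      ← Finset.sum_add_distrib, ← hcardV]
    rw [show ((Finset.univ : Finset V).card) = ∑ u : V, 1 from (Finset.card_eq_sum_ones _)]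
    exact Finset.sum_congr rfl fun u _ => by
      by_cases h1 : u ∈ Z <;> by_cases h2 : u ∈ L <;> simp [h1, h2]
  have hld : l + d = m := by omega
  -- nonemptiness
  have hkl1 : 1 ≤ k + l := by
    obtain ⟨x, hx⟩ := Set.nonempty_iff_ne_empty.mpr hZne
    by_cases hxL : x ∈ L
    · have : x ∈ Finset.univ.filter (fun u : V => u ∈ Z ∧ u ∈ L) := by simp [hx, hxL]
      have := Finset.card_pos.mpr ⟨x, this⟩
      omega
    · have : x ∈ Finset.univ.filter (fun u : V => u ∈ Z ∧ u ∉ L) := by simp [hx, hxL]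
      have := Finset.card_pos.mpr ⟨x, this⟩
      omega
  have hcd1 : 1 ≤ c + d := by
    have : ∃ x, x ∉ Z := by
      by_contra h
      push_neg at h
      exact hZuniv (Set.eq_univ_iff_forall.mpr h)
    obtain ⟨x, hx⟩ := this
    by_cases hxL : x ∈ L
    · have : x ∈ Finset.univ.filter (fun u : V => u ∉ Z ∧ u ∈ L) := by simp [hx, hxL]
      have := Finset.card_pos.mpr ⟨x, this⟩
      omega
    · have : x ∈ Finset.univ.filter (fun u : V => u ∉ Z ∧ u ∉ L) := by simp [hx, hxL]
      have := Finset.card_pos.mpr ⟨x, this⟩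
      omega
  -- not a star cut with center in L
  have hA : ¬ (k = 1 ∧ l = 0) := by
    rintro ⟨hk1, hl0⟩
    obtain ⟨x, hxeq⟩ := Finset.card_eq_one.mp hk1
    have hxmem : x ∈ Finset.univ.filter (fun u : V => u ∈ Z ∧ u ∈ L) := by
      rw [hxeq]; exact Finset.mem_singleton_self x
    simp only [Finset.mem_filter, Finset.mem_univ, true_and] at hxmem
    have hempty := Finset.card_eq_zero.mp hl0
    have hZx : Z = {x} := by
      ext z
      constructor
      · intro hz
        by_cases hzL : z ∈ L
        · have : z ∈ Finset.univ.filter (fun u : V => u ∈ Z ∧ u ∈ L) := by simp [hz, hzL]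
          rw [hxeq] at this
          simpa using this
        · have : z ∈ Finset.univ.filter (fun u : V => u ∈ Z ∧ u ∉ L) := by simp [hz, hzL]
          rw [hempty] at this
          simp at this
      · intro hz
        rw [Set.mem_singleton_iff] at hz
        rw [hz]; exact hxmem.1
    exact (hstar x hxmem.2).1 hZx
  have hB : ¬ (c = 1 ∧ d = 0) := by
    rintro ⟨hc1, hd0⟩
    obtain ⟨x, hxeq⟩ := Finset.card_eq_one.mp hc1
    have hxmem : x ∈ Finset.univ.filter (fun u : V => u ∉ Z ∧ u ∈ L) := by
      rw [hxeq]; exact Finset.mem_singleton_self x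
    simp only [Finset.mem_filter, Finset.mem_univ, true_and] at hxmem
    have hempty := Finset.card_eq_zero.mp hd0
    have hZx : Z = ({x} : Set V)ᶜ := by
      ext z
      simp only [Set.mem_compl_iff, Set.mem_singleton_iff]
      constructor
      · intro hz heq
        rw [heq] at hz
        exact hxmem.1 hz
      · intro hne
        by_contra hz
        by_cases hzL : z ∈ L
        · have : z ∈ Finset.univ.filter (fun u : V => u ∉ Z ∧ u ∈ L) := by simp [hz, hzL]
          rw [hxeq] at this
          simp at this
          exact hne this
        · have : z ∈ Finset.univ.filter (fun u : V => u ∉ Z ∧ u ∉ L) := by simp [hz, hzL]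
          rw [hempty] at this
          simp at this
    exact (hstar x hxmem.2).2 hZx
  -- the counting lower bound
  have hbound : (k : ℝ) * d + (l : ℝ) * c ≤ cutWeight w Z := by
    have hpoint : ∀ u v : V,
        (if (u ∈ Z ∧ u ∈ L) then (1:ℝ) else 0) * (if (v ∉ Z ∧ v ∉ L) then (1:ℝ) else 0)
        + (if (u ∈ Z ∧ u ∉ L) then (1:ℝ) else 0) * (if (v ∉ Z ∧ v ∈ L) then (1:ℝ) else 0)
        ≤ (if u ∈ Z ∧ v ∉ Z then w u v else 0) := by
      intro u v
      by_cases h1 : u ∈ Z <;> by_cases h2 : v ∈ Z <;> by_cases h3 : u ∈ L <;>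
        by_cases h4 : v ∈ L <;> simp [h1, h2, h3, h4]
      · exact le_of_eq (hinL u h3 v h4).symm
      · exact hge1 u h3 v h4
      · rw [hsymm]; exact hge1 v h4 u h3
      · exact le_of_eq (hinR u h3 v h4).symm
    calc (k : ℝ) * d + (l : ℝ) * c
        = (∑ u : V, if (u ∈ Z ∧ u ∈ L) then (1:ℝ) else 0) *
            (∑ v : V, if (v ∉ Z ∧ v ∉ L) then (1:ℝ) else 0)
          + (∑ u : V, if (u ∈ Z ∧ u ∉ L) then (1:ℝ) else 0) *
            (∑ v : V, if (v ∉ Z ∧ v ∈ L) then (1:ℝ) else 0) := by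
          simp [Finset.sum_boole, hk, hl, hc, hd]
      _ = ∑ u : V, ∑ v : V,
            ((if (u ∈ Z ∧ u ∈ L) then (1:ℝ) else 0) * (if (v ∉ Z ∧ v ∉ L) then (1:ℝ) else 0)
            + (if (u ∈ Z ∧ u ∉ L) then (1:ℝ) else 0) * (if (v ∉ Z ∧ v ∈ L) then (1:ℝ) else 0)) := by
          rw [Finset.sum_mul_sum, Finset.sum_mul_sum, ← Finset.sum_add_distrib]
          exact Finset.sum_congr rfl fun u _ => (Finset.sum_add_distrib).symm
      _ ≤ ∑ u : V, ∑ v : V, (if u ∈ Z ∧ v ∉ Z then w u v else 0) := by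
          refine Finset.sum_le_sum fun u _ => Finset.sum_le_sum fun v _ => hpoint u v
      _ = cutWeight w Z := rfl
  -- arithmetic
  have harith : 2 * m ≤ k * d + l * c := by
    rcases Nat.eq_zero_or_pos l with hl0 | hl1
    · have hdm : d = m := by omega
      have hk2 : 2 ≤ k := by omega
      have : 2 * m ≤ k * d := by rw [hdm]; exact Nat.mul_le_mul_right m hk2
      omega
    · rcases Nat.eq_zero_or_pos d with hd0 | hd1
      · have hlm : l = m := by omega
        have hc2 : 2 ≤ c := by omega
        have : 2 * m ≤ l * c := by
          rw [hlm]
          calc 2 * m = m * 2 := by ring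
            _ ≤ m * c := Nat.mul_le_mul_left m hc2
        omega
      · have h1 : k ≤ k * d := Nat.le_mul_of_pos_right k hd1
        have h2 : c ≤ l * c := Nat.le_mul_of_pos_left c hl1
        omega
  calc (n : ℝ) / 2 = ((2 * m : ℕ) : ℝ) := by rw [hm]; push_cast; ring
    _ ≤ ((k * d + l * c : ℕ) : ℝ) := by exact_mod_cast harith
    _ = (k : ℝ) * d + (l : ℝ) * c := by push_cast; ring
    _ ≤ cutWeight w Z := hbound
end

section
/- Let T = (V_T, E_T) be a tree with root r and let Q ⊆ E(T) ∪ E(T)^(2), with S = {shore(f) : f ∈ Q}. Suppose each vertex u receives the key value k_u = ℓ_0 + Σ_{f ∈ Q : u ∈ shore(f)} ℓ_f (mod M), where ℓ_0 and the ℓ_f are independent uniform random elements of Z_M. Then: (a) if u and v lie in the same atom of atoms(S), then k_u = k_v with probability 1; (b) if u and v lie in different atoms, then Pr[k_u = k_v] = 1/M; and (c) by a union bound, with probability at least 1 − C(n,2)/M, the partition of V by equal key values equals atoms(S), where n = |V_T|. -/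
open Finset

lemma AddMonoidHom.card_ker_mul_card_of_surjective {G H : Type*} [AddGroup G] [AddGroup H]
    (f : G →+ H) (hf : Function.Surjective f) : Nat.card f.ker * Nat.card H = Nat.card G := by
  rw [← AddSubgroup.card_mul_index f.ker, AddSubgroup.index_ker, AddMonoidHom.range_eq_top.mpr hf,
    AddSubgroup.card_top]

lemma Set.ncard_iUnion_mul_le {Ω ι : Type*} [Fintype ι] (E : ι → Set Ω) {m N : ℕ}
    (h : ∀ i, (E i).ncard * m ≤ N) : (⋃ i, E i).ncard * m ≤ Fintype.card ι * N :=
  calc (⋃ i, E i).ncard * m ≤ (∑ i, (E i).ncard) * m :=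
        Nat.mul_le_mul_right m (Set.ncard_iUnion_le_of_fintype E)
    _ = ∑ i, (E i).ncard * m := sum_mul ..
    _ ≤ ∑ _ : ι, N := sum_le_sum fun i _ => h i
    _ = Fintype.card ι * N := by simp

section ShoreKey

variable {V ι A : Type*} [Fintype ι] [AddCommGroup A]

lemma sameAtom_comm {T : Set (Set V)} {u v : V} : sameAtom T u v ↔ sameAtom T v u :=
  forall₂_congr fun _ _ => Iff.comm

open Classical in
noncomputable def shoreKey (sh : ι → Set V) (u : V) : A × (ι → A) →+ A where
  toFun p := p.1 + ∑ f, if u ∈ sh f then p.2 f else 0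
  map_zero' := by simp
  map_add' p q := by
    simp only [Prod.fst_add, Prod.snd_add, Pi.add_apply, ite_add_zero, sum_add_distrib]
    abel

open Classical in
lemma shoreKey_apply_single (sh : ι → Set V) (u : V) (i : ι) (a : A) :
    shoreKey sh u (0, Pi.single i a) = if u ∈ sh i then a else 0 := by
  simp only [shoreKey, AddMonoidHom.coe_mk, ZeroHom.coe_mk, zero_add]
  rw [Fintype.sum_eq_single i fun f hf => by simp [hf]]
  simp

lemma shoreKey_eq_of_sameAtom {sh : ι → Set V} {u v : V} (h : sameAtom (Set.range sh) u v)
    (p : A × (ι → A)) : shoreKey sh u p = shoreKey sh v p := by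
  classical
  simp only [shoreKey, AddMonoidHom.coe_mk, ZeroHom.coe_mk]
  congr 1
  exact sum_congr rfl fun f _ => if_congr (h (sh f) ⟨f, rfl⟩) rfl rfl

lemma shoreKey_sub_surjective {sh : ι → Set V} {u v : V} (h : ¬ sameAtom (Set.range sh) u v) :
    Function.Surjective (shoreKey (A := A) sh u - shoreKey (A := A) sh v) := by
  classical
  obtain ⟨_, ⟨i, rfl⟩, hi⟩ := not_forall₂.mp h
  intro a
  by_cases hu : u ∈ sh i
  · have hv : v ∉ sh i := fun hv => hi (iff_of_true hu hv)
    exact ⟨(0, Pi.single i a), by simp [shoreKey_apply_single, hu, hv]⟩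
  · have hv : v ∈ sh i := by_contra fun hv => hi (iff_of_false hu hv)
    exact ⟨(0, Pi.single i (-a)), by simp [shoreKey_apply_single, hu, hv]⟩

lemma ncard_shoreKey_eq_mul_card [Finite A] {sh : ι → Set V} {u v : V}
    (h : ¬ sameAtom (Set.range sh) u v) :
    {p : A × (ι → A) | shoreKey sh u p = shoreKey sh v p}.ncard * Nat.card A =
      Nat.card (A × (ι → A)) := by
  have hker : {p : A × (ι → A) | shoreKey sh u p = shoreKey sh v p} =
      (shoreKey (A := A) sh u - shoreKey (A := A) sh v).ker := by
    ext p
    simp [sub_eq_zero]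
  rw [hker, ← Nat.card_coe_set_eq]
  exact AddMonoidHom.card_ker_mul_card_of_surjective _ (shoreKey_sub_surjective h)

def shoreCollision (sh : ι → Set V) : Sym2 V → Set (A × (ι → A)) :=
  Sym2.lift ⟨fun u v => {p | shoreKey sh u p = shoreKey sh v p ∧ ¬ sameAtom (Set.range sh) u v},
    fun _ _ => Set.ext fun _ => and_congr eq_comm (not_congr sameAtom_comm)⟩

lemma ncard_shoreCollision_mul_le [Finite A] (sh : ι → Set V) (z : Sym2 V) :
    (shoreCollision (A := A) sh z).ncard * Nat.card A ≤ Nat.card (A × (ι → A)) := by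
  induction z using Sym2.ind with
  | _ u v =>
    by_cases h : sameAtom (Set.range sh) u v
    · simp [shoreCollision, h]
    · calc (shoreCollision sh s(u, v)).ncard * Nat.card A
          ≤ {p : A × (ι → A) | shoreKey sh u p = shoreKey sh v p}.ncard * Nat.card A :=
            Nat.mul_le_mul_right _ (Set.ncard_le_ncard fun p hp => hp.1)
        _ = Nat.card (A × (ι → A)) := ncard_shoreKey_eq_mul_card h

lemma compl_setOf_shoreKey_iff_sameAtom_subset (sh : ι → Set V) :
    {p : A × (ι → A) | ∀ u v, shoreKey sh u p = shoreKey sh v p ↔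
        sameAtom (Set.range sh) u v}ᶜ ⊆
      ⋃ z : {z : Sym2 V // ¬ z.IsDiag}, shoreCollision sh z := by
  intro p hp
  obtain ⟨u, v, huv⟩ :
      ∃ u v, ¬ (shoreKey sh u p = shoreKey sh v p ↔ sameAtom (Set.range sh) u v) := by
    simpa using hp
  have hcoll : shoreKey sh u p = shoreKey sh v p ∧ ¬ sameAtom (Set.range sh) u v := by
    by_cases h : sameAtom (Set.range sh) u v
    · exact absurd (iff_of_true (shoreKey_eq_of_sameAtom h p) h) huv
    · exact ⟨not_not.mp fun hne => huv (iff_of_false hne h), h⟩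
  have hne : u ≠ v := by
    rintro rfl
    exact hcoll.2 fun _ _ => Iff.rfl
  exact Set.mem_iUnion.mpr ⟨⟨s(u, v), Sym2.mk_isDiag_iff.not.mpr hne⟩, hcoll⟩

lemma ncard_compl_setOf_shoreKey_iff_sameAtom_mul_le [Fintype V] [Finite A] (sh : ι → Set V) :
    {p : A × (ι → A) | ∀ u v, shoreKey sh u p = shoreKey sh v p ↔
        sameAtom (Set.range sh) u v}ᶜ.ncard * Nat.card A ≤
      (Fintype.card V).choose 2 * Nat.card (A × (ι → A)) := by
  classical
  rw [← Sym2.card_subtype_not_diag]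
  exact (Nat.mul_le_mul_right _
    (Set.ncard_le_ncard (compl_setOf_shoreKey_iff_sameAtom_subset sh))).trans
      (Set.ncard_iUnion_mul_le _ fun z => ncard_shoreCollision_mul_le sh z)

end ShoreKey

open Classical in
theorem stmt_14_general {V : Type*} [Fintype V] {ι : Type*} [Fintype ι]
    (M : ℕ) [NeZero M]
    (sh : ι → Set V)
    -- the key of `u` for random seeds `p = (ℓ₀, ℓ)` is `ℓ₀ + Σ_{f : u ∈ shore(f)} ℓ_f`
    (key : ZMod M × (ι → ZMod M) → V → ZMod M)
    (hkey : ∀ p u, key p u = p.1 + ∑ f : ι, if u ∈ sh f then p.2 f else 0) :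
    -- (a) vertices in the same atom always get equal keys
    (∀ u v : V, sameAtom (Set.range sh) u v →
      ∀ p : ZMod M × (ι → ZMod M), key p u = key p v) ∧
    -- (b) vertices in different atoms collide with probability exactly `1/M`
    (∀ u v : V, ¬ sameAtom (Set.range sh) u v →
      Set.ncard {p : ZMod M × (ι → ZMod M) | key p u = key p v} * M =
        Nat.card (ZMod M × (ι → ZMod M))) ∧
    -- (c) with probability at least `1 − C(n,2)/M` the equal-key partition is `atoms(S)`
    ((1 - ((Fintype.card V).choose 2 : ℝ) / M) *
        (Nat.card (ZMod M × (ι → ZMod M)) : ℝ) ≤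
      (Set.ncard {p : ZMod M × (ι → ZMod M) |
        ∀ u v : V, key p u = key p v ↔ sameAtom (Set.range sh) u v} : ℝ)) := by
  obtain rfl : key = fun p u => shoreKey sh u p := funext fun p => funext (hkey p)
  refine ⟨fun u v h p => shoreKey_eq_of_sameAtom h p, fun u v h => ?_, ?_⟩
  · simpa only [Nat.card_zmod] using ncard_shoreKey_eq_mul_card (A := ZMod M) h
  · set good := {p : ZMod M × (ι → ZMod M) |
      ∀ u v, shoreKey sh u p = shoreKey sh v p ↔ sameAtom (Set.range sh) u v}
    set N := Nat.card (ZMod M × (ι → ZMod M))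
    have hbad : (goodᶜ.ncard : ℝ) * M ≤ (Fintype.card V).choose 2 * N := by
      have := ncard_compl_setOf_shoreKey_iff_sameAtom_mul_le (A := ZMod M) sh
      rw [Nat.card_zmod] at this
      exact_mod_cast this
    have hsplit : (good.ncard : ℝ) + goodᶜ.ncard = N := by
      exact_mod_cast Set.ncard_add_ncard_compl good
    have hM : (0 : ℝ) < M := by exact_mod_cast Nat.pos_of_neZero M
    calc (1 - ((Fintype.card V).choose 2 : ℝ) / M) * N
        = N - (Fintype.card V).choose 2 * N / M := by ring
      _ ≤ N - goodᶜ.ncard := by gcongr; rwa [le_div_iff₀ hM]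
      _ = good.ncard := by linarith

open Classical in
theorem stmt_14 {V : Type*} [Fintype V] {ι : Type*} [Fintype ι]
    (M : ℕ) (hM : 0 < M) [NeZero M]
    -- a tree `T` with root `r`, and `Q` a family (indexed by `ι`) of edge sets
    -- `f ∈ E(T) ∪ E(T)^(2)`, with `sh i = shore(q i)` the shore not containing `r`
    (T : SimpleGraph V) (hT : T.IsTree) (r : V)
    (q : ι → Set (Sym2 V))
    (hq : ∀ i : ι, q i ⊆ T.edgeSet ∧ ((q i).ncard = 1 ∨ (q i).ncard = 2))
    (sh : ι → Set V)
    (hsh : ∀ i : ι, r ∉ sh i ∧ cutEdges T (sh i) = q i)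
    -- the key of `u` for random seeds `p = (ℓ₀, ℓ)` is `ℓ₀ + Σ_{f : u ∈ shore(f)} ℓ_f`
    (key : ZMod M × (ι → ZMod M) → V → ZMod M)
    (hkey : ∀ p u, key p u = p.1 + ∑ f : ι, if u ∈ sh f then p.2 f else 0) :
    -- (a) vertices in the same atom always get equal keys
    (∀ u v : V, sameAtom (Set.range sh) u v →
      ∀ p : ZMod M × (ι → ZMod M), key p u = key p v) ∧
    -- (b) vertices in different atoms collide with probability exactly `1/M`
    (∀ u v : V, ¬ sameAtom (Set.range sh) u v →
      Set.ncard {p : ZMod M × (ι → ZMod M) | key p u = key p v} * M =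
        Nat.card (ZMod M × (ι → ZMod M))) ∧
    -- (c) with probability at least `1 − C(n,2)/M` the equal-key partition is `atoms(S)`
    ((1 - ((Fintype.card V).choose 2 : ℝ) / M) *
        (Nat.card (ZMod M × (ι → ZMod M)) : ℝ) ≤
      (Set.ncard {p : ZMod M × (ι → ZMod M) |
        ∀ u v : V, key p u = key p v ↔ sameAtom (Set.range sh) u v} : ℝ)) :=
  stmt_14_general M sh key hkey
end

section
/- Given a weighted tree packing of an integer-weighted graph G of total value βc and a cut of G of weight αc (with α/β < 3), at least a (3 − α/β)/2 fraction of the trees, by weight, cross the cut in at most 2 edges (i.e., 2-respect the cut). -/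
private lemma exists_cross {V : Type*} {G : SimpleGraph V} {X : Set V} :
    ∀ {x y : V}, G.Walk x y → x ∈ X → y ∉ X → ∃ a b, G.Adj a b ∧ a ∈ X ∧ b ∉ X
  | _, _, SimpleGraph.Walk.nil, hx, hy => absurd hx hy
  | x, y, SimpleGraph.Walk.cons (v := v) h q, hx, hy => by
    classical
    by_cases hv : v ∈ X
    · exact exists_cross q hv hy
    · exact ⟨x, v, h, hx, hv⟩

open Classical in
private lemma ncard_cut_eq {V : Type*} [Fintype V] (T : SimpleGraph V) (X : Set V) :
    (cutEdges T X).ncard =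
      (Finset.univ.filter (fun p : V × V => T.Adj p.1 p.2 ∧ p.1 ∈ X ∧ p.2 ∉ X)).card := by
  have hset : cutEdges T X =
      ↑((Finset.univ.filter (fun p : V × V => T.Adj p.1 p.2 ∧ p.1 ∈ X ∧ p.2 ∉ X)).image
        (fun p : V × V => s(p.1, p.2))) := by
    ext e
    simp only [cutEdges, Set.mem_setOf_eq, Finset.coe_image, Set.mem_image, Finset.mem_coe,
      Finset.mem_filter, Finset.mem_univ, true_and]
    constructor
    · rintro ⟨he, a, b, rfl, ha, hb⟩
      exact ⟨(a, b), ⟨he, ha, hb⟩, rfl⟩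
    · rintro ⟨⟨a, b⟩, ⟨hadj, ha, hb⟩, rfl⟩
      exact ⟨hadj, a, b, rfl, ha, hb⟩
  rw [hset, Set.ncard_coe_finset, Finset.card_image_of_injOn]
  rintro ⟨a, b⟩ hab ⟨c, d⟩ hcd h
  simp only [Finset.mem_coe, Finset.mem_filter, Finset.mem_univ, true_and] at hab hcd
  simp only [Sym2.eq, Sym2.rel_iff', Prod.mk.injEq, Prod.swap_prod_mk] at h
  rcases h with ⟨rfl, rfl⟩ | ⟨rfl, rfl⟩
  · rfl
  · exact absurd hab.2.1 hcd.2.2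

open Classical in
theorem stmt_16 {V : Type*} [Fintype V] {ι : Type*} [Fintype ι]
    -- an integer-weighted graph `G = (V, w)`
    (w : V → V → ℕ) (hsymm : ∀ u v, w u v = w v u)
    -- a weighted tree packing: spanning trees `Ti i` of `G` with weights `β i > 0`,
    -- such that the total weight of trees containing any edge is at most its weight
    (Ti : ι → SimpleGraph V) (htree : ∀ i, (Ti i).IsTree)
    (hsub : ∀ i (u v : V), (Ti i).Adj u v → 0 < w u v)
    (β : ι → ℝ) (hβpos : ∀ i, 0 < β i)
    (hpack : ∀ u v : V, u ≠ v →
      (∑ i : ι, if (Ti i).Adj u v then β i else 0) ≤ (w u v : ℝ))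
    -- the packing has value `β₀·c` and the cut with shore `X` has weight `α·c`
    (β₀ c α : ℝ) (hβ₀ : 0 < β₀) (hc : 0 < c)
    (hval : ∑ i : ι, β i = β₀ * c)
    (X : Set V) (hX1 : X ≠ ∅) (hX2 : X ≠ Set.univ)
    (hcut : (∑ u : V, ∑ v : V, if u ∈ X ∧ v ∉ X then (w u v : ℝ) else 0) = α * c)
    (hαβ : α / β₀ < 3) :
    -- at least a `(3 − α/β₀)/2` fraction of the trees, by weight, 2-respect the cut
    (3 - α / β₀) / 2 * (β₀ * c) ≤
      ∑ i : ι, if (cutEdges (Ti i) X).ncard ≤ 2 then β i else 0 := by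
  classical
  set P : ι → Finset (V × V) :=
    fun i => Finset.univ.filter (fun p : V × V => (Ti i).Adj p.1 p.2 ∧ p.1 ∈ X ∧ p.2 ∉ X)
    with hP
  -- Step B: each tree crosses at least once
  have hP1 : ∀ i, 1 ≤ (P i).card := by
    intro i
    obtain ⟨x, hx⟩ := Set.nonempty_iff_ne_empty.2 hX1
    obtain ⟨y, hy⟩ : ∃ y, y ∉ X := by
      by_contra h
      push_neg at h
      exact hX2 (Set.eq_univ_of_forall h)
    obtain ⟨a, b, hadj, ha, hb⟩ :=
      exists_cross (((htree i).isConnected.1 x y).some) hx hy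
    have : (a, b) ∈ P i := by
      simp [hP, hadj, ha, hb]
    exact Finset.card_pos.2 ⟨_, this⟩
  -- Step C: total cut load
  have hkey : (∑ i : ι, β i * (P i).card) ≤ α * c := by
    have h1 : ∀ i : ι, β i * (P i).card =
        ∑ u : V, ∑ v : V, (if (Ti i).Adj u v ∧ u ∈ X ∧ v ∉ X then β i else 0) := by
      intro i
      rw [← Finset.sum_product']
      rw [hP, Finset.card_filter]
      push_cast
      rw [Finset.mul_sum]
      apply Finset.sum_congr rfl
      intro p _
      by_cases h : (Ti i).Adj p.1 p.2 ∧ p.1 ∈ X ∧ p.2 ∉ X <;> simp [h]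
    calc ∑ i : ι, β i * (P i).card
        = ∑ u : V, ∑ v : V, ∑ i : ι, (if (Ti i).Adj u v ∧ u ∈ X ∧ v ∉ X then β i else 0) := by
          simp_rw [h1]
          rw [Finset.sum_comm]
          exact Finset.sum_congr rfl fun u _ => Finset.sum_comm
      _ ≤ ∑ u : V, ∑ v : V, (if u ∈ X ∧ v ∉ X then (w u v : ℝ) else 0) := by
          apply Finset.sum_le_sum; intro u _
          apply Finset.sum_le_sum; intro v _
          by_cases hQ : u ∈ X ∧ v ∉ X
          · simp only [hQ, if_true]
            have huv : u ≠ v := fun h => hQ.2 (h ▸ hQ.1)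
            refine le_trans ?_ (hpack u v huv)
            apply Finset.sum_le_sum
            intro i _
            by_cases h : (Ti i).Adj u v <;> simp [h, hQ]
          · simp only [hQ, if_false]
            apply Finset.sum_nonpos
            intro i _
            have : ¬((Ti i).Adj u v ∧ u ∈ X ∧ v ∉ X) := fun h => hQ h.2
            simp [this]
      _ = α * c := hcut
  -- Step D: Markov
  set S : Finset ι := Finset.univ.filter (fun i => (cutEdges (Ti i) X).ncard ≤ 2) with hS
  have hgoal : (∑ i : ι, if (cutEdges (Ti i) X).ncard ≤ 2 then β i else 0)
      = ∑ i ∈ S, β i := by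
    rw [hS, Finset.sum_filter]
  have hsplit : (∑ i ∈ S, β i) + (∑ i ∈ Sᶜ, β i) = β₀ * c := by
    rw [Finset.sum_add_sum_compl, hval]
  have hbad : (∑ i ∈ Sᶜ, β i) * 2 ≤ α * c - β₀ * c := by
    have h2 : ∀ i ∈ Sᶜ, β i * 2 ≤ β i * ((P i).card - 1) := by
      intro i hi
      have : ¬ (cutEdges (Ti i) X).ncard ≤ 2 := by
        simpa [hS] using hi
      have hcard : (cutEdges (Ti i) X).ncard = (P i).card := ncard_cut_eq (Ti i) X
      have h3 : 3 ≤ (P i).card := by omega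
      have : (2 : ℝ) ≤ ((P i).card : ℝ) - 1 := by
        have : (3 : ℝ) ≤ ((P i).card : ℝ) := by exact_mod_cast h3
        linarith
      exact mul_le_mul_of_nonneg_left this (hβpos i).le
    calc (∑ i ∈ Sᶜ, β i) * 2 = ∑ i ∈ Sᶜ, β i * 2 := by rw [Finset.sum_mul]
      _ ≤ ∑ i ∈ Sᶜ, β i * ((P i).card - 1) := Finset.sum_le_sum h2
      _ ≤ ∑ i : ι, β i * ((P i).card - 1) := by
          apply Finset.sum_le_sum_of_subset_of_nonneg (Finset.subset_univ _)
          intro i _ _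
          have h1 : (1 : ℝ) ≤ ((P i).card : ℝ) := by exact_mod_cast hP1 i
          have := hβpos i
          nlinarith
      _ = (∑ i : ι, β i * (P i).card) - ∑ i : ι, β i := by
          rw [← Finset.sum_sub_distrib]
          apply Finset.sum_congr rfl
          intro i _
          ring
      _ ≤ α * c - β₀ * c := by rw [hval]; linarith [hkey]
  rw [hgoal]
  have hfrac : (3 - α / β₀) / 2 * (β₀ * c) = (3 * (β₀ * c) - α * c) / 2 := by
    field_simp
  rw [hfrac]
  linarith [hsplit, hbad]
end
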